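/- Let g and h be real vector spaces, ▷ : g × h → h a bilinear action, ⟨,⟩_g a symmetric bilinear form on g, ⟨,⟩_h a symmetric bilinear form on h, and σ : h × h → g a bilinear antisymmetric map (σ(Y', Y) = − σ(Y, Y')) satisfying ⟨σ(Y, Y'), X⟩_g = − ⟨Y, X ▷ Y'⟩_h for all X ∈ g, Y, Y' ∈ h. Define the bilinear map σ̄ on forms as the wedge via σ: σ̄(B₁, B₂) := B₁ ∧^σ B₂. Then for a real vector space V and alternating multilinear maps A : V^k → g, B₁ : V^{t₁} → h, B₂ : V^{t₂} → h, one has ⟨σ̄(B₁, B₂), A⟩ = (−1)^{k t₂ + 1} ⟨B₁, A ∧^▷ B₂⟩ and ⟨A, σ̄(B₁, B₂)⟩ = (−1)^{t₁ t₂ + 1} ⟨A ∧^▷ B₂, B₁⟩ as alternating (k+t₁+t₂)-linear maps V^{k+t₁+t₂} → ℝ. -/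

import Mathlib

/-- A (k, l)-shuffle: a permutation of `Fin (k + l)` that is strictly increasing on the
first `k` indices and on the last `l` indices. -/
def IsShuffle (k l : ℕ) (σ : Equiv.Perm (Fin (k + l))) : Prop :=
  (∀ i j : Fin k, i < j → σ (Fin.castAdd l i) < σ (Fin.castAdd l j)) ∧
  (∀ i j : Fin l, i < j → σ (Fin.natAdd k i) < σ (Fin.natAdd k j))

instance (k l : ℕ) (σ : Equiv.Perm (Fin (k + l))) : Decidable (IsShuffle k l σ) := by
  unfold IsShuffle; infer_instance

/-- The wedge product, via a bilinear pairing `μ : E → F → W`, of a `k`-form `A` and an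
`l`-form `B` (given as functions on tuples of vectors):
`(A ∧^μ B)(v) = Σ_σ sgn(σ) μ(A(v_{σ(1)},…,v_{σ(k)}), B(v_{σ(k+1)},…,v_{σ(k+l)}))`,
the sum ranging over `(k, l)`-shuffles `σ`. -/
def wedge {V E F W : Type*} [AddCommGroup W]
    (μ : E → F → W) {k l : ℕ}
    (A : (Fin k → V) → E) (B : (Fin l → V) → F) :
    (Fin (k + l) → V) → W :=
  fun v => ∑ σ : Equiv.Perm (Fin (k + l)),
    if IsShuffle k l σ then
      (Equiv.Perm.sign σ : ℤ) •
        μ (A fun i => v (σ (Fin.castAdd l i))) (B fun i => v (σ (Fin.natAdd k i)))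
    else 0

/-- Identify `m`-forms with `n`-forms along an equality `m = n` of arities. -/
def reindex {V W : Type*} {m n : ℕ} (h : m = n) (f : (Fin m → V) → W) :
    (Fin n → V) → W :=
  fun v => f fun i => v (Fin.cast h i)

/-!
Every permutation of `Fin (k + l)` factors uniquely as a `(k, l)`-shuffle followed by a
permutation of each block (sorting the two blocks finds the factor), so both nestings
`(A₁ ∧ A₂) ∧ A₃` and `A₁ ∧ (A₂ ∧ A₃)` expand to the same sum over `(a, b, c)`-shuffles: the wedge is
associative whenever the pairings satisfy `μ (ν x y) z = μ' x (ν' y z)`. Precomposing shuffles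
with the rotation of `Fin (k + l)` by `l`, of sign `(-1)^(k l)`, gives graded commutativity
`A ∧ B = (-1)^(k l) B ∧ A`.

The defining identity of `σ` is such an associativity law, `-⟨σ(Y, Y'), X⟩_g = ⟨Y, X ▷ Y'⟩_h`.
Hence the first identity is associativity after commuting `A` past `B₂`, and the second follows
from the first by commuting the outer factors on both sides.
-/

section

open Equiv Fin

def sumPerm (k l : ℕ) : Perm (Fin k) × Perm (Fin l) →* Perm (Fin (k + l)) :=
  finSumFinEquiv.permCongrHom.toMonoidHom.comp (Perm.sumCongrHom (Fin k) (Fin l))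

variable {k l : ℕ}

@[simp] lemma sumPerm_apply_castAdd (τ : Perm (Fin k) × Perm (Fin l)) (i : Fin k) :
    sumPerm k l τ (castAdd l i) = castAdd l (τ.1 i) := by
  simp [sumPerm, Equiv.permCongrHom, Equiv.permCongr_apply]

@[simp] lemma sumPerm_apply_natAdd (τ : Perm (Fin k) × Perm (Fin l)) (i : Fin l) :
    sumPerm k l τ (natAdd k i) = natAdd k (τ.2 i) := by
  simp [sumPerm, Equiv.permCongrHom, Equiv.permCongr_apply]

@[simp] lemma sign_sumPerm (τ : Perm (Fin k) × Perm (Fin l)) :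
    Perm.sign (sumPerm k l τ) = Perm.sign τ.1 * Perm.sign τ.2 := by
  simp [sumPerm, Equiv.permCongrHom, Perm.sign_permCongr, Perm.sign_sumCongr]

lemma coe_mul_sumPerm_comp_castAdd (σ : Perm (Fin (k + l))) (τ : Perm (Fin k) × Perm (Fin l)) :
    ⇑(σ * sumPerm k l τ) ∘ castAdd l = (σ ∘ castAdd l) ∘ τ.1 := by
  funext i; simp

lemma coe_mul_sumPerm_comp_natAdd (σ : Perm (Fin (k + l))) (τ : Perm (Fin k) × Perm (Fin l)) :
    ⇑(σ * sumPerm k l τ) ∘ natAdd k = (σ ∘ natAdd k) ∘ τ.2 := by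
  funext i; simp

lemma StrictMono.strictMono_comp_iff {α β γ : Type*} [LinearOrder α] [Preorder β]
    [Preorder γ] {g : α → β} (hg : StrictMono g) {f : γ → α} :
    StrictMono (g ∘ f) ↔ StrictMono f :=
  ⟨fun h _ _ hab => hg.lt_iff_lt.mp (h hab), hg.comp⟩

lemma Equiv.Perm.strictMono_iff {n : ℕ} (τ : Perm (Fin n)) : StrictMono τ ↔ τ = 1 :=
  ⟨fun h => τ.monotone_iff.mp h.monotone, by rintro rfl; exact strictMono_id⟩

lemma Tuple.strictMono_comp_sort {n : ℕ} {α : Type*} [LinearOrder α] {f : Fin n → α}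
    (hf : Function.Injective f) : StrictMono (f ∘ Tuple.sort f) :=
  (Tuple.monotone_sort f).strictMono_of_injective (hf.comp (Tuple.sort f).injective)

lemma Tuple.sort_comp_perm {n : ℕ} {α : Type*} [LinearOrder α] {f : Fin n → α}
    (hf : StrictMono f) (τ : Perm (Fin n)) : Tuple.sort (f ∘ τ) = τ⁻¹ := by
  have hmono : Monotone ((f ∘ τ) ∘ ⇑τ⁻¹) := by simpa [Function.comp_def] using hf.monotone
  have := Tuple.comp_sort_eq_comp_iff_monotone.mpr hmono
  exact DFunLike.coe_injective ((hf.injective.comp τ.injective).comp_left this).symm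

lemma isShuffle_iff {σ : Perm (Fin (k + l))} :
    IsShuffle k l σ ↔ StrictMono (σ ∘ castAdd l) ∧ StrictMono (σ ∘ natAdd k) := Iff.rfl

def blockSort (ρ : Perm (Fin (k + l))) : Perm (Fin k) × Perm (Fin l) :=
  (Tuple.sort (ρ ∘ castAdd l), Tuple.sort (ρ ∘ natAdd k))

lemma isShuffle_mul_sumPerm_blockSort (ρ : Perm (Fin (k + l))) :
    IsShuffle k l (ρ * sumPerm k l (blockSort ρ)) := by
  rw [isShuffle_iff, coe_mul_sumPerm_comp_castAdd, coe_mul_sumPerm_comp_natAdd]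
  exact ⟨Tuple.strictMono_comp_sort (ρ.injective.comp (castAdd_injective k l)),
    Tuple.strictMono_comp_sort (ρ.injective.comp (natAdd_injective l k))⟩

lemma blockSort_mul_sumPerm {σ : Perm (Fin (k + l))} (hσ : IsShuffle k l σ)
    (τ : Perm (Fin k) × Perm (Fin l)) : blockSort (σ * sumPerm k l τ) = τ⁻¹ := by
  rw [blockSort, coe_mul_sumPerm_comp_castAdd, coe_mul_sumPerm_comp_natAdd,
    Tuple.sort_comp_perm (f := σ ∘ castAdd l) hσ.1, Tuple.sort_comp_perm (f := σ ∘ natAdd k) hσ.2]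
  rfl

def shuffleDecomp (k l : ℕ) :
    {σ // IsShuffle k l σ} × (Perm (Fin k) × Perm (Fin l)) ≃ Perm (Fin (k + l)) where
  toFun p := p.1 * sumPerm k l p.2
  invFun ρ := (⟨_, isShuffle_mul_sumPerm_blockSort ρ⟩, (blockSort ρ)⁻¹)
  left_inv := by
    rintro ⟨⟨σ, hσ⟩, τ⟩
    simp [blockSort_mul_sumPerm hσ]
  right_inv ρ := by simp

lemma sum_perm_eq_sum_shuffle {W : Type*} [AddCommMonoid W] (F : Perm (Fin (k + l)) → W) :
    ∑ ρ, F ρ = ∑ σ, if IsShuffle k l σ then ∑ τ, F (σ * sumPerm k l τ) else 0 := by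
  rw [← Fintype.sum_equiv (shuffleDecomp k l) (fun p => F (p.1.1 * sumPerm k l p.2)) F
    (fun _ => rfl), Fintype.sum_prod_type, ← Finset.sum_filter]
  exact (Finset.sum_subtype _ (by simp) (fun σ => ∑ τ, F (σ * sumPerm k l τ))).symm

def IsShuffle₃ (a b c : ℕ) (ρ : Perm (Fin (a + b + c))) : Prop :=
  StrictMono (ρ ∘ castAdd c ∘ castAdd b) ∧ StrictMono (ρ ∘ castAdd c ∘ natAdd a) ∧
    StrictMono (ρ ∘ natAdd (a + b))

instance (a b c : ℕ) : DecidablePred (IsShuffle₃ a b c) := fun _ => by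
  unfold IsShuffle₃ StrictMono; infer_instance

variable {a b c : ℕ}

@[simp] lemma cast_add_assoc_castAdd_castAdd (i : Fin a) :
    Fin.cast (Nat.add_assoc a b c) (castAdd c (castAdd b i)) = castAdd (b + c) i :=
  Fin.ext (by simp)

@[simp] lemma cast_add_assoc_castAdd_natAdd (i : Fin b) :
    Fin.cast (Nat.add_assoc a b c) (castAdd c (natAdd a i)) = natAdd a (castAdd c i) :=
  Fin.ext (by simp)

@[simp] lemma cast_add_assoc_natAdd (i : Fin c) :
    Fin.cast (Nat.add_assoc a b c) (natAdd (a + b) i) = natAdd a (natAdd b i) :=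
  Fin.ext (by simp [Nat.add_assoc])

lemma isShuffle₃_mul_sumPerm_left {σ : Perm (Fin (a + b + c))} (hσ : IsShuffle (a + b) c σ)
    (τ : Perm (Fin (a + b)) × Perm (Fin c)) :
    IsShuffle₃ a b c (σ * sumPerm (a + b) c τ) ↔ IsShuffle a b τ.1 ∧ τ.2 = 1 := by
  obtain ⟨hσ₁, hσ₂⟩ := isShuffle_iff.mp hσ
  have hL (n : ℕ) (g : Fin n → Fin (a + b)) :
      ⇑(σ * sumPerm (a + b) c τ) ∘ castAdd c ∘ g = (σ ∘ castAdd c) ∘ (τ.1 ∘ g) := by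
    rw [← Function.comp_assoc, coe_mul_sumPerm_comp_castAdd, Function.comp_assoc]
  rw [IsShuffle₃, hL, hL, coe_mul_sumPerm_comp_natAdd, hσ₁.strictMono_comp_iff,
    hσ₁.strictMono_comp_iff, hσ₂.strictMono_comp_iff, Perm.strictMono_iff, isShuffle_iff,
    and_assoc]

lemma isShuffle₃_permCongr_mul_sumPerm_right {σ : Perm (Fin (a + (b + c)))}
    (hσ : IsShuffle a (b + c) σ) (τ : Perm (Fin a) × Perm (Fin (b + c))) :
    IsShuffle₃ a b c ((finCongr (Nat.add_assoc a b c).symm).permCongr (σ * sumPerm a (b + c) τ))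
      ↔ τ.1 = 1 ∧ IsShuffle b c τ.2 := by
  obtain ⟨hσ₁, hσ₂⟩ := isShuffle_iff.mp hσ
  set ρ := (finCongr (Nat.add_assoc a b c).symm).permCongr (σ * sumPerm a (b + c) τ)
  have h₁ : ⇑ρ ∘ castAdd c ∘ castAdd b =
      Fin.cast (Nat.add_assoc a b c).symm ∘ (σ ∘ castAdd (b + c)) ∘ τ.1 := by
    funext i
    simp [ρ, Equiv.permCongr_apply]
  have h₂ (n : ℕ) (g : Fin n → Fin (b + c)) (g' : Fin n → Fin (a + b + c))
      (hg : ∀ i, Fin.cast (Nat.add_assoc a b c) (g' i) = natAdd a (g i)) :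
      ⇑ρ ∘ g' = Fin.cast (Nat.add_assoc a b c).symm ∘ (σ ∘ natAdd a) ∘ (τ.2 ∘ g) := by
    funext i
    simp [ρ, Equiv.permCongr_apply, hg]
  rw [IsShuffle₃, h₁, h₂ b (castAdd c) (castAdd c ∘ natAdd a) cast_add_assoc_castAdd_natAdd,
    h₂ c (natAdd b) _ cast_add_assoc_natAdd,
    (Fin.cast_strictMono _).strictMono_comp_iff, (Fin.cast_strictMono _).strictMono_comp_iff,
    (Fin.cast_strictMono _).strictMono_comp_iff, hσ₁.strictMono_comp_iff,
    hσ₂.strictMono_comp_iff, hσ₂.strictMono_comp_iff, Perm.strictMono_iff, isShuffle_iff]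

lemma sum_isShuffle₃_eq_left {W : Type*} [AddCommMonoid W] (F : Perm (Fin (a + b + c)) → W) :
    ∑ ρ, (if IsShuffle₃ a b c ρ then F ρ else 0) =
      ∑ σ, if IsShuffle (a + b) c σ then
        ∑ τ, (if IsShuffle a b τ then F (σ * sumPerm (a + b) c (τ, 1)) else 0) else 0 := by
  rw [sum_perm_eq_sum_shuffle]
  refine Finset.sum_congr rfl fun σ _ => ?_
  split_ifs with hσ
  · rw [Fintype.sum_prod_type]
    refine Finset.sum_congr rfl fun τ₁ _ => ?_
    simp_rw [isShuffle₃_mul_sumPerm_left hσ]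
    by_cases hτ₁ : IsShuffle a b τ₁ <;> simp [hτ₁]
  · rfl

lemma sum_isShuffle₃_eq_right {W : Type*} [AddCommMonoid W] (F : Perm (Fin (a + b + c)) → W) :
    ∑ ρ, (if IsShuffle₃ a b c ρ then F ρ else 0) =
      ∑ σ, if IsShuffle a (b + c) σ then
        ∑ τ, (if IsShuffle b c τ then
          F ((finCongr (Nat.add_assoc a b c).symm).permCongr (σ * sumPerm a (b + c) (1, τ)))
          else 0) else 0 := by
  rw [← Fintype.sum_equiv (finCongr (Nat.add_assoc a b c).symm).permCongr _ _ (fun _ => rfl),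
    sum_perm_eq_sum_shuffle]
  refine Finset.sum_congr rfl fun σ _ => ?_
  split_ifs with hσ
  · rw [Fintype.sum_prod_type, Finset.sum_comm]
    refine Finset.sum_congr rfl fun τ₂ _ => ?_
    simp_rw [isShuffle₃_permCongr_mul_sumPerm_right hσ]
    by_cases hτ₂ : IsShuffle b c τ₂ <;> simp [hτ₂]
  · rfl

section TripleWedge

variable {V E₁ E₂ E₃ G W : Type*} [AddCommGroup G] [AddCommGroup W]

def wedge₃ (φ : E₁ → E₂ → E₃ → W) (A₁ : (Fin a → V) → E₁) (A₂ : (Fin b → V) → E₂)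
    (A₃ : (Fin c → V) → E₃) : (Fin (a + b + c) → V) → W :=
  fun v => ∑ ρ, if IsShuffle₃ a b c ρ then
      (Perm.sign ρ : ℤ) • φ (A₁ fun i => v (ρ (castAdd c (castAdd b i))))
        (A₂ fun i => v (ρ (castAdd c (natAdd a i)))) (A₃ fun i => v (ρ (natAdd (a + b) i)))
    else 0

theorem wedge_wedge_eq_wedge₃ (μ : G → E₃ → W) (ν : E₁ → E₂ → G)
    (hμ : ∀ x y z, μ (x + y) z = μ x z + μ y z)
    (A₁ : (Fin a → V) → E₁) (A₂ : (Fin b → V) → E₂) (A₃ : (Fin c → V) → E₃) :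
    wedge μ (wedge ν A₁ A₂) A₃ = wedge₃ (fun x y z => μ (ν x y) z) A₁ A₂ A₃ := by
  funext v
  let M (z : E₃) : G →+ W := AddMonoidHom.mk' (μ · z) (fun x y => hμ x y z)
  rw [wedge₃, sum_isShuffle₃_eq_left, wedge]
  refine Finset.sum_congr rfl fun σ _ => ?_
  split_ifs with hσ
  · change _ • M _ (wedge ν A₁ A₂ _) = _
    rw [wedge, map_sum, Finset.smul_sum]
    refine Finset.sum_congr rfl fun τ _ => ?_
    split_ifs
    · rw [map_zsmul]
      simp [M, mul_smul]
    · simp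
  · rfl

theorem wedge_wedge_eq_reindex_wedge₃ (μ : E₁ → G → W) (ν : E₂ → E₃ → G)
    (hμ : ∀ x y z, μ x (y + z) = μ x y + μ x z)
    (A₁ : (Fin a → V) → E₁) (A₂ : (Fin b → V) → E₂) (A₃ : (Fin c → V) → E₃) :
    wedge μ A₁ (wedge ν A₂ A₃) =
      reindex (Nat.add_assoc a b c) (wedge₃ (fun x y z => μ x (ν y z)) A₁ A₂ A₃) := by
  funext v
  let M (x : E₁) : G →+ W := AddMonoidHom.mk' (μ x) (hμ x)
  rw [reindex, wedge₃, sum_isShuffle₃_eq_right, wedge]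
  refine Finset.sum_congr rfl fun σ _ => ?_
  split_ifs with hσ
  · change _ • M _ (wedge ν A₂ A₃ _) = _
    rw [wedge, map_sum, Finset.smul_sum]
    refine Finset.sum_congr rfl fun τ _ => ?_
    split_ifs
    · rw [map_zsmul]
      simp [M, mul_smul, Equiv.permCongr_apply]
    · simp
  · rfl

theorem wedge_assoc {G' : Type*} [AddCommGroup G'] (μ : G → E₃ → W) (ν : E₁ → E₂ → G)
    (μ' : E₁ → G' → W) (ν' : E₂ → E₃ → G') (hμ : ∀ x y z, μ (x + y) z = μ x z + μ y z)
    (hμ' : ∀ x y z, μ' x (y + z) = μ' x y + μ' x z) (h : ∀ x y z, μ (ν x y) z = μ' x (ν' y z))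
    (A₁ : (Fin a → V) → E₁) (A₂ : (Fin b → V) → E₂) (A₃ : (Fin c → V) → E₃) :
    wedge μ' A₁ (wedge ν' A₂ A₃) = reindex (Nat.add_assoc a b c) (wedge μ (wedge ν A₁ A₂) A₃) := by
  simp only [wedge_wedge_eq_reindex_wedge₃ μ' ν' hμ', wedge_wedge_eq_wedge₃ μ ν hμ, h]

end TripleWedge

section Commutativity

variable {k l : ℕ}

def blockSwap (k l : ℕ) : Perm (Fin (k + l)) := finAddFlip.trans (finCongr (Nat.add_comm l k))

lemma val_blockSwap (x : Fin (k + l)) : (blockSwap k l x : ℕ) = (x + l) % (k + l) := by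
  refine Fin.addCases (fun i => ?_) (fun j => ?_) x
  · simp [blockSwap, Nat.mod_eq_of_lt (by omega : (i : ℕ) + l < k + l)]
  · simp [blockSwap, show k + (j : ℕ) + l = j + (k + l) by omega,
      Nat.mod_eq_of_lt (by omega : (j : ℕ) < k + l)]

lemma val_finRotate_pow (n m : ℕ) (x : Fin n) : ((finRotate n ^ m) x : ℕ) = (x + m) % n := by
  induction m with
  | zero => simp [Nat.mod_eq_of_lt x.isLt]
  | succ m ih =>
    rw [pow_succ', Perm.mul_apply, finRotate_apply, Fin.val_add, ih, Fin.val_one',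
      ← Nat.add_mod, Nat.add_assoc]

lemma blockSwap_eq_finRotate_pow : blockSwap k l = finRotate (k + l) ^ l :=
  Equiv.ext fun x => Fin.ext (by rw [val_blockSwap, val_finRotate_pow])

lemma sign_blockSwap : Perm.sign (blockSwap k l) = (-1) ^ (k * l) := by
  rw [blockSwap_eq_finRotate_pow, map_pow, sign_finRotate, ← pow_mul]
  rcases l with _ | l
  · simp
  · rw [show (k + (l + 1) - 1) * (l + 1) = k * (l + 1) + l * (l + 1) by
      rw [show k + (l + 1) - 1 = k + l by omega]; ring,
      pow_add, (Nat.even_mul_succ_self l).neg_one_pow, mul_one]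

lemma blockSwap_symm_cast_castAdd (j : Fin l) :
    (blockSwap k l).symm (Fin.cast (Nat.add_comm l k) (castAdd k j)) = natAdd k j := by
  rw [Equiv.symm_apply_eq]; simp [blockSwap]

lemma blockSwap_symm_cast_natAdd (i : Fin k) :
    (blockSwap k l).symm (Fin.cast (Nat.add_comm l k) (natAdd l i)) = castAdd l i := by
  rw [Equiv.symm_apply_eq]; simp [blockSwap]

def shuffleSwap (k l : ℕ) : Perm (Fin (k + l)) ≃ Perm (Fin (l + k)) :=
  (Equiv.mulRight (blockSwap k l)⁻¹).trans (finCongr (Nat.add_comm k l)).permCongr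

lemma shuffleSwap_apply (σ : Perm (Fin (k + l))) (x : Fin (l + k)) :
    shuffleSwap k l σ x =
      Fin.cast (Nat.add_comm k l) (σ ((blockSwap k l).symm (Fin.cast (Nat.add_comm l k) x))) :=
  rfl

lemma sign_shuffleSwap (σ : Perm (Fin (k + l))) :
    Perm.sign (shuffleSwap k l σ) = Perm.sign σ * (-1) ^ (k * l) := by
  simp [shuffleSwap, Perm.sign_permCongr, sign_blockSwap]

lemma isShuffle_shuffleSwap_iff {σ : Perm (Fin (k + l))} :
    IsShuffle l k (shuffleSwap k l σ) ↔ IsShuffle k l σ := by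
  have h₁ : ⇑(shuffleSwap k l σ) ∘ castAdd k = Fin.cast (Nat.add_comm k l) ∘ (σ ∘ natAdd k) := by
    funext j; simp only [Function.comp_apply, shuffleSwap_apply, blockSwap_symm_cast_castAdd]
  have h₂ : ⇑(shuffleSwap k l σ) ∘ natAdd l = Fin.cast (Nat.add_comm k l) ∘ (σ ∘ castAdd l) := by
    funext i; simp only [Function.comp_apply, shuffleSwap_apply, blockSwap_symm_cast_natAdd]
  rw [isShuffle_iff, isShuffle_iff, h₁, h₂, (Fin.cast_strictMono _).strictMono_comp_iff,
    (Fin.cast_strictMono _).strictMono_comp_iff, and_comm]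

theorem wedge_comm {V E F W : Type*} [AddCommGroup W] (μ : E → F → W) (μ' : F → E → W)
    (hμ : ∀ x y, μ' y x = μ x y) (A : (Fin k → V) → E) (B : (Fin l → V) → F) :
    wedge μ A B = ((-1 : ℤ) ^ (k * l)) • reindex (Nat.add_comm l k) (wedge μ' B A) := by
  funext v
  rw [Pi.smul_apply, reindex, wedge, wedge, Finset.smul_sum]
  refine Fintype.sum_equiv (shuffleSwap k l) _ _ fun σ => ?_
  by_cases hσ : IsShuffle k l σ
  · rw [if_pos hσ, if_pos (isShuffle_shuffleSwap_iff.mpr hσ)]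
    have hsq : ((-1 : ℤ) ^ (k * l)) * (-1) ^ (k * l) = 1 := by rw [← mul_pow]; norm_num
    simp only [shuffleSwap_apply, Fin.cast_cast, blockSwap_symm_cast_castAdd, Fin.cast_eq_self,
      blockSwap_symm_cast_natAdd, hμ, sign_shuffleSwap, smul_smul]
    push_cast
    rw [mul_left_comm, hsq, mul_one]
  · rw [if_neg hσ, if_neg (isShuffle_shuffleSwap_iff.not.mpr hσ), smul_zero]

end Commutativity

section Linearity

variable {V E F W : Type*} [AddCommGroup W] {k l : ℕ}

lemma wedge_reindex_right (μ : E → F → W) (A : (Fin k → V) → E) {m n : ℕ} (h : m = n)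
    (B : (Fin m → V) → F) :
    wedge μ A (reindex h B) = reindex (congrArg (k + ·) h) (wedge μ A B) := by
  subst h; rfl

lemma wedge_zsmul_right [AddCommGroup F] (μ : E → F → W)
    (hμ : ∀ x y z, μ x (y + z) = μ x y + μ x z) (A : (Fin k → V) → E) (B : (Fin l → V) → F)
    (n : ℤ) : wedge μ A (n • B) = n • wedge μ A B := by
  funext v
  let M (x : E) : F →+ W := AddMonoidHom.mk' (μ x) (hμ x)
  simp only [wedge, Pi.smul_apply, Finset.smul_sum, smul_ite, smul_zero]
  refine Finset.sum_congr rfl fun σ _ => ?_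
  congr 1
  change _ • M _ (n • _) = _
  rw [map_zsmul, smul_comm]
  rfl

lemma wedge_neg_pairing (μ : E → F → W) (A : (Fin k → V) → E) (B : (Fin l → V) → F) :
    wedge (fun x y => -μ x y) A B = -wedge μ A B := by
  funext v
  simp only [wedge, Pi.neg_apply, ← Finset.sum_neg_distrib, smul_neg]
  refine Finset.sum_congr rfl fun σ _ => ?_
  split_ifs <;> simp

end Linearity

end

theorem sigmaBar_inner_left {g h V : Type*} [AddCommGroup g] [Module ℝ g] [AddCommGroup h]
    [Module ℝ h] (act : g →ₗ[ℝ] h →ₗ[ℝ] h) (inng : g →ₗ[ℝ] g →ₗ[ℝ] ℝ)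
    (innh : h →ₗ[ℝ] h →ₗ[ℝ] ℝ) (s : h →ₗ[ℝ] h →ₗ[ℝ] g)
    (s_def : ∀ (X : g) (Y Y' : h), inng (s Y Y') X = - innh Y (act X Y'))
    {k t₁ t₂ : ℕ} (A : (Fin k → V) → g) (B₁ : (Fin t₁ → V) → h) (B₂ : (Fin t₂ → V) → h) :
    wedge (fun X X' => inng X X') (wedge (fun Y Y' => s Y Y') B₁ B₂) A =
      ((-1 : ℝ) ^ (k * t₂ + 1)) •
        reindex ((Nat.add_assoc t₁ k t₂).symm.trans (Nat.add_right_comm t₁ k t₂))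
          (wedge (fun Y Y' => innh Y Y') B₁ (wedge (fun X Y => act X Y) A B₂)) := by
  have hassoc := wedge_assoc (fun X X' => -inng X X') (fun Y Y' => s Y Y')
    (fun Y Y' => innh Y Y') (fun Y X => act X Y) (fun _ _ _ => by simp; abel)
    (fun _ _ _ => by simp) (fun _ _ _ => by simp [s_def]) B₁ B₂ A
  rw [wedge_comm (fun X Y => act X Y) (fun Y X => act X Y) (fun _ _ => rfl),
    wedge_zsmul_right _ (fun _ _ _ => by simp), wedge_reindex_right, hassoc, wedge_neg_pairing]
  funext v
  simp only [reindex, Pi.smul_apply, Pi.neg_apply, Fin.cast_cast, Fin.cast_eq_self]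
  simp only [smul_eq_mul, zsmul_eq_mul, Int.cast_pow, Int.cast_neg, Int.cast_one]
  have hsq : ((-1 : ℝ) ^ (k * t₂)) * (-1) ^ (k * t₂) = 1 := by rw [← mul_pow]; norm_num
  linear_combination (-wedge (fun X X' => inng X X') (wedge (fun Y Y' => s Y Y') B₁ B₂) A v) * hsq

/-- For `σ̄(B₁, B₂) := B₁ ∧^σ B₂` with `σ` bilinear antisymmetric satisfying
`⟨σ(Y, Y'), X⟩_g = - ⟨Y, X ▷ Y'⟩_h`, one has
`⟨σ̄(B₁, B₂), A⟩ = (-1)^(k t₂ + 1) ⟨B₁, A ∧^▷ B₂⟩` and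
`⟨A, σ̄(B₁, B₂)⟩ = (-1)^(t₁ t₂ + 1) ⟨A ∧^▷ B₂, B₁⟩`. -/
theorem sigmaBar_inner_identities {g h V : Type*} [AddCommGroup g] [Module ℝ g]
    [AddCommGroup h] [Module ℝ h] [AddCommGroup V] [Module ℝ V]
    (act : g →ₗ[ℝ] h →ₗ[ℝ] h)
    (inng : g →ₗ[ℝ] g →ₗ[ℝ] ℝ) (inng_symm : ∀ X X' : g, inng X X' = inng X' X)
    (innh : h →ₗ[ℝ] h →ₗ[ℝ] ℝ) (innh_symm : ∀ Y Y' : h, innh Y Y' = innh Y' Y)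
    (s : h →ₗ[ℝ] h →ₗ[ℝ] g)
    (s_def : ∀ (X : g) (Y Y' : h), inng (s Y Y') X = - innh Y (act X Y'))
    {k t₁ t₂ : ℕ} (A : AlternatingMap ℝ V g (Fin k))
    (B₁ : AlternatingMap ℝ V h (Fin t₁)) (B₂ : AlternatingMap ℝ V h (Fin t₂)) :
    wedge (fun X X' => inng X X') (wedge (fun Y Y' => s Y Y') ⇑B₁ ⇑B₂) ⇑A =
      ((-1 : ℝ) ^ (k * t₂ + 1)) •
        reindex (by omega : t₁ + (k + t₂) = (t₁ + t₂) + k)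
          (wedge (fun Y Y' => innh Y Y') ⇑B₁ (wedge (fun X Y => act X Y) ⇑A ⇑B₂)) ∧
    wedge (fun X X' => inng X X') ⇑A (wedge (fun Y Y' => s Y Y') ⇑B₁ ⇑B₂) =
      ((-1 : ℝ) ^ (t₁ * t₂ + 1)) •
        reindex (by omega : (k + t₂) + t₁ = k + (t₁ + t₂))
          (wedge (fun Y Y' => innh Y Y') (wedge (fun X Y => act X Y) ⇑A ⇑B₂) ⇑B₁) := by
  have first := sigmaBar_inner_left act inng innh s s_def ⇑A ⇑B₁ ⇑B₂
  refine ⟨first, ?_⟩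
  rw [wedge_comm _ (fun X X' => inng X X') (fun X X' => inng_symm X' X), first,
    wedge_comm _ (fun Y Y' => innh Y Y') (fun Y Y' => innh_symm Y' Y)]
  funext v
  simp only [reindex, Pi.smul_apply, Fin.cast_cast]
  simp only [smul_eq_mul, zsmul_eq_mul, Int.cast_pow, Int.cast_neg, Int.cast_one]
  rw [← mul_assoc, ← mul_assoc, ← pow_add, ← pow_add,
    show k * (t₁ + t₂) + (k * t₂ + 1) + t₁ * (k + t₂) = 2 * (k * t₁ + k * t₂) + (t₁ * t₂ + 1) by
      ring,
    pow_add, (even_two_mul _).neg_one_pow, one_mul]
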